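/- Let Γ, h, α, n, z_1, …, z_{n−1} and ϱ be as specified, and fix 0 ≤ k ≤ n−2. Define f : Γ → gl(n,ℂ) by f(γ) = Σ_{i=2}^{n} h_{n−i+1}(γ) E_i^{n−k}, and its coboundary δf(γ₁,γ₂) = ϱ(γ₁) f(γ₂) ϱ(γ₁)^{−1} − f(γ₁γ₂) + f(γ₁). Then for all γ₁, γ₂ ∈ Γ, the matrix δf(γ₁,γ₂) − (Σ_{i=1}^{n−1} z_i(γ₁) h_{n−i}(γ₂)) E_1^{n−k} has all entries in columns 1, …, n−k equal to zero; i.e. δf = (Σ_{i=1}^{n−1} z_i ⌣ h_{n−i}) E_1^{n−k} + x with x taking values in C(k−1) (interpreted as 0 when k = 0). -/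

import Mathlib

open Matrix LaurentPolynomial

noncomputable section

/-- Generalized binomial coefficient C(m,k) for m : ℤ, as a complex number. -/
def gbinom (m : ℤ) (k : ℕ) : ℂ :=
  (∏ i ∈ Finset.range k, ((m : ℂ) - i)) / (Nat.factorial k)

/-- The n×n nilpotent Jordan matrix N. -/
def Nmat (n : ℕ) : Matrix (Fin n) (Fin n) ℂ :=
  Matrix.of fun i j => if (i : ℕ) + 1 = (j : ℕ) then 1 else 0

/-- The unipotent Jordan block J = I + N. -/
def Jmat (n : ℕ) : Matrix (Fin n) (Fin n) ℂ := 1 + Nmat n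

lemma Jmat_blockTriangular (n : ℕ) : (Jmat n).BlockTriangular id := by
  intro i j hij
  have hji : (j : ℕ) < (i : ℕ) := hij
  simp only [Jmat, Matrix.add_apply, Matrix.one_apply, Nmat, Matrix.of_apply]
  rw [if_neg (by intro h; subst h; exact lt_irrefl _ hji), if_neg (by omega)]
  simp

lemma Jmat_isUnit (n : ℕ) : IsUnit (Jmat n) := by
  rw [Matrix.isUnit_iff_isUnit_det,
    Matrix.det_of_upperTriangular (Jmat_blockTriangular n)]
  have : ∀ i : Fin n, Jmat n i i = 1 := by
    intro i
    simp [Jmat, Matrix.one_apply, Nmat]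
  simp [this]

/-- Integer powers of the unipotent Jordan block. -/
def Jz (n : ℕ) (m : ℤ) : Matrix (Fin n) (Fin n) ℂ :=
  (((Jmat_isUnit n).unit ^ m : (Matrix (Fin n) (Fin n) ℂ)ˣ) : Matrix (Fin n) (Fin n) ℂ)

/-- The representation ϱ : Γ → GL(n,ℂ), with `ϱ(γ)_{1,1} = α^{h(γ)}`,
`ϱ(γ)_{1,j} = z_{j−1}(γ)` for `2 ≤ j ≤ n`, `ϱ(γ)_{i,1} = 0` for `2 ≤ i ≤ n`, and
`ϱ(γ)_{i,j} = (J_{n−1}^{h(γ)})_{i−1,j−1}` for `2 ≤ i, j ≤ n` (1-based indices). -/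
def rhoMat (Γ : Type*) (α : ℂ) (n : ℕ) (h : Γ → ℤ) (z : Γ → ℕ → ℂ) (γ : Γ) :
    Matrix (Fin n) (Fin n) ℂ :=
  Matrix.of fun i j =>
    if hi : (i : ℕ) = 0 then
      (if (j : ℕ) = 0 then α ^ h γ else z γ (j : ℕ))
    else
      (if hj : (j : ℕ) = 0 then 0
       else Jz (n - 1) (h γ) ⟨(i : ℕ) - 1, by have := i.isLt; omega⟩
              ⟨(j : ℕ) - 1, by have := j.isLt; omega⟩)

/-- The subspace `C(i)` of `gl(n,ℂ)` of matrices whose columns of 0-based index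
`< n−1−i` vanish. -/
def Csub (n i : ℕ) : Submodule ℂ (Matrix (Fin n) (Fin n) ℂ) where
  carrier := {X | ∀ a b : Fin n, (b : ℕ) < n - 1 - i → X a b = 0}
  add_mem' := by
    intro X Y hX hY a b hb
    simp [Matrix.add_apply, hX a b hb, hY a b hb]
  zero_mem' := by intro a b hb; rfl
  smul_mem' := by
    intro c X hX a b hb
    simp [Matrix.smul_apply, hX a b hb]

lemma stdBasisMatrix_mem_Csub (n k : ℕ) (i j : Fin n) (hj : n - 1 - k ≤ (j : ℕ)) :
    Matrix.single i j (1 : ℂ) ∈ Csub n k := by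
  intro a b hb
  have hjb : j ≠ b := by
    intro hjb
    subst hjb
    omega
  simp [Matrix.single, Matrix.of_apply]
  intro _ hcontra
  exact absurd hcontra hjb


/-- The cochain `f(γ) = Σ_{i=2}^{n} h_{n−i+1}(γ) E_i^{n−k}` (here the row index is
0-based: the 0-based row `r = i−1` ranges over `1,…,n−1` and carries the coefficient
`h_{n−r}(γ) = C(h(γ), n−r)`; the column `n−k` is 0-based index `n−1−k`). -/
def fcochain (Γ : Type*) (h : Γ → ℤ) (n k : ℕ) (hkn : k + 1 ≤ n) (γ : Γ) :
    Matrix (Fin n) (Fin n) ℂ :=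
  ∑ r : Fin n,
    (if (r : ℕ) = 0 then 0 else gbinom (h γ) (n - (r : ℕ)))
      • Matrix.single r (⟨n - 1 - k, by omega⟩ : Fin n) (1 : ℂ)

/-!
The cochain has rank one: `f(γ) = v(γ) e_cᵀ` with `c = n - 1 - k` (indices 0-based) and
`v(γ) = (0, h_{n-1}(γ), …, h_1(γ))`, so `ϱ(γ₁) f(γ₂) ϱ(γ₁)⁻¹ = (ϱ(γ₁) v(γ₂)) (e_cᵀ ϱ(γ₁)⁻¹)`.
As `ϱ(γ₁)` is upper triangular with diagonal `(α^h, 1, …, 1)` and `c ≠ 0`, row `c` of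
`ϱ(γ₁)⁻¹` agrees with `e_cᵀ` in the columns `≤ c`, where the coboundary is therefore
`(ϱ(γ₁) v(γ₂) - v(γ₁γ₂) + v(γ₁)) e_cᵀ`. With `J^m = (C(m, j - i))_{i ≤ j}`, the rows `≥ 1` of
this vector vanish by Chu–Vandermonde, `C(m₁ + m₂, t) - C(m₁, t) = Σ_{s < t} C(m₁, s) C(m₂, t - s)`,
and its row `0` is `Σ_i z_i(γ₁) h_{n-i}(γ₂)`.
-/

lemma gbinom_eq_ringChoose (m : ℤ) (k : ℕ) : gbinom m k = Ring.choose (m : ℂ) k := by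
  rw [Ring.choose_eq_smul, ← Polynomial.aeval_eq_smeval, Polynomial.aeval_def,
    Polynomial.eval₂_eq_eval_map, descPochhammer_map, descPochhammer_eval_eq_prod_range,
    gbinom, smul_eq_mul, div_eq_inv_mul]

lemma gbinom_zero_right (m : ℤ) : gbinom m 0 = 1 := by
  simp [gbinom]

lemma gbinom_natCast (m k : ℕ) : gbinom m k = m.choose k := by
  rw [gbinom_eq_ringChoose, Int.cast_natCast, Ring.choose_natCast]

lemma gbinom_add (m₁ m₂ : ℤ) (t : ℕ) :
    gbinom (m₁ + m₂) t = ∑ s ∈ Finset.range (t + 1), gbinom m₁ s * gbinom m₂ (t - s) := by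
  simp only [gbinom_eq_ringChoose, Int.cast_add, Ring.add_choose_eq t (Commute.all (m₁ : ℂ) m₂)]
  exact Finset.Nat.sum_antidiagonal_eq_sum_range_succ
    (fun a b => Ring.choose (m₁ : ℂ) a * Ring.choose (m₂ : ℂ) b) t

lemma sum_range_gbinom_mul_gbinom (m₁ m₂ : ℤ) (t : ℕ) :
    ∑ s ∈ Finset.range t, gbinom m₁ s * gbinom m₂ (t - s) = gbinom (m₁ + m₂) t - gbinom m₁ t := by
  rw [gbinom_add, Finset.sum_range_succ, Nat.sub_self, gbinom_zero_right]
  ring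

lemma Fin.sum_univ_ite_Ico_eq_sum_range {M : Type*} [AddCommMonoid M] {n a b : ℕ} (hb : b ≤ n)
    (f : ℕ → M) :
    ∑ r : Fin n, (if a ≤ (r : ℕ) ∧ (r : ℕ) < b then f r else 0) =
      ∑ s ∈ Finset.range (b - a), f (a + s) := by
  rw [Fin.sum_univ_eq_sum_range (fun r => if a ≤ r ∧ r < b then f r else 0), ← Finset.sum_filter,
    ← Finset.sum_Ico_eq_sum_range]
  congr 1
  ext r
  simp only [Finset.mem_filter, Finset.mem_range, Finset.mem_Ico]
  omega

theorem Matrix.IsUpperTriangular.inv_apply_self_mul_apply_self {m R : Type*} [Fintype m]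
    [LinearOrder m] [CommRing R] {M : Matrix m m R} (hM : M.IsUpperTriangular)
    (hdet : IsUnit M.det) (i : m) : M⁻¹ i i * M i i = 1 := by
  have := M.invertibleOfIsUnitDet hdet
  have hinv := blockTriangular_inv_of_blockTriangular hM
  have hii := congr_fun (congr_fun (M.nonsing_inv_mul hdet) i) i
  rwa [Matrix.mul_apply, Finset.sum_eq_single i, Matrix.one_apply_eq] at hii
  · intro r _ hri
    rcases lt_or_gt_of_ne hri with hlt | hgt
    · rw [hinv hlt, zero_mul]
    · rw [hM hgt, mul_zero]
  · simp

def binomMat (n : ℕ) (m : ℤ) : Matrix (Fin n) (Fin n) ℂ :=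
  Matrix.of fun i j => if i ≤ j then gbinom m ((j : ℕ) - i) else 0

lemma binomMat_zero (n : ℕ) : binomMat n 0 = 1 := by
  ext i j
  simp only [binomMat, Matrix.of_apply, Matrix.one_apply, ← Nat.cast_zero (R := ℤ),
    gbinom_natCast]
  rcases lt_trichotomy i j with hij | rfl | hji
  · simp [hij.le, hij.ne, Nat.choose_eq_zero_of_lt (Nat.sub_pos_of_lt hij)]
  · simp
  · simp [not_le.mpr hji, hji.ne']

lemma binomMat_one (n : ℕ) : binomMat n 1 = Jmat n := by
  ext i j
  simp only [binomMat, Jmat, Nmat, Matrix.of_apply, Matrix.add_apply, Matrix.one_apply,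
    ← Nat.cast_one (R := ℤ), gbinom_natCast]
  rcases lt_or_ge j i with hji | hij
  · simp [not_le.mpr hji, hji.ne', show (i : ℕ) + 1 ≠ j by omega]
  · obtain hd | hd | hd : (j : ℕ) - i = 0 ∨ (j : ℕ) - i = 1 ∨ 1 < (j : ℕ) - i := by omega
    · obtain rfl : i = j := by omega
      simp
    · simp [hij, hd, show i ≠ j by omega, show (i : ℕ) + 1 = j by omega]
    · simp [hij, Nat.choose_eq_zero_of_lt hd, show i ≠ j by omega, show (i : ℕ) + 1 ≠ j by omega]

lemma binomMat_add (n : ℕ) (a b : ℤ) : binomMat n (a + b) = binomMat n a * binomMat n b := by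
  ext i j
  have hsummand : ∀ r : Fin n, binomMat n a i r * binomMat n b r j =
      if (i : ℕ) ≤ r ∧ (r : ℕ) < j + 1 then gbinom a (r - i) * gbinom b (j - r) else 0 := by
    intro r
    simp only [binomMat, Matrix.of_apply, Fin.le_def, Nat.lt_succ_iff]
    split_ifs <;> simp_all
  rw [Matrix.mul_apply, Finset.sum_congr rfl fun r _ => hsummand r,
    Fin.sum_univ_ite_Ico_eq_sum_range (b := j + 1) (by omega)
      fun r => gbinom a (r - i) * gbinom b (j - r)]
  simp only [binomMat, Matrix.of_apply, Fin.le_def]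
  split_ifs with hij
  · rw [gbinom_add, show (j : ℕ) + 1 - i = j - i + 1 by omega]
    refine Finset.sum_congr rfl fun s _ => ?_
    rw [Nat.add_sub_cancel_left, Nat.sub_add_eq]
  · rw [show (j : ℕ) + 1 - i = 0 by omega, Finset.sum_range_zero]

lemma Jz_eq_binomMat (n : ℕ) (m : ℤ) : Jz n m = binomMat n m := by
  let φ : Multiplicative ℤ →* Matrix (Fin n) (Fin n) ℂ :=
    { toFun := fun m => binomMat n m.toAdd
      map_one' := binomMat_zero n
      map_mul' := fun a b => binomMat_add n _ _ }
  have hφ : zpowersHom _ (Jmat_isUnit n).unit = φ.toHomUnits :=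
    MonoidHom.ext_mint (Units.ext (by simp [φ, binomMat_one]))
  exact congrArg Units.val (DFunLike.congr_fun hφ (Multiplicative.ofAdd m))

def binomVec (n : ℕ) (m : ℤ) : Fin n → ℂ :=
  fun r => if (r : ℕ) = 0 then 0 else gbinom m (n - r)

lemma fcochain_eq_vecMulVec {Γ : Type*} (h : Γ → ℤ) (n k : ℕ) (hkn : k + 1 ≤ n) (γ : Γ) :
    fcochain Γ h n k hkn γ =
      vecMulVec (binomVec n (h γ)) (Pi.single ⟨n - 1 - k, by omega⟩ 1) := by
  ext a b
  rw [fcochain, Matrix.sum_apply, Finset.sum_eq_single a]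
  · by_cases ha : (a : ℕ) = 0 <;>
      simp [ha, binomVec, vecMulVec_apply, Pi.single_apply, Matrix.single_apply, eq_comm]
  · intro r _ hra
    simp [hra]
  · simp

section rhoMat

variable {Γ : Type*} (α : ℂ) (n : ℕ) (h : Γ → ℤ) (z : Γ → ℕ → ℂ) (γ : Γ)

lemma rhoMat_apply_of_ne_zero {i : Fin n} (hi : (i : ℕ) ≠ 0) (j : Fin n) :
    rhoMat Γ α n h z γ i j = if i ≤ j then gbinom (h γ) ((j : ℕ) - i) else 0 := by
  by_cases hj : (j : ℕ) = 0
  · rw [if_neg (by rw [Fin.le_def]; omega)]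
    simp [rhoMat, hi, hj]
  · simp only [rhoMat, Matrix.of_apply, dif_neg hi, dif_neg hj, Jz_eq_binomMat, binomMat,
      Fin.le_def, show (j : ℕ) - 1 - (i - 1) = j - i by omega]
    exact if_congr (by omega) rfl rfl

lemma rhoMat_isUpperTriangular : (rhoMat Γ α n h z γ).IsUpperTriangular := by
  intro i j (hji : j < i)
  rw [rhoMat_apply_of_ne_zero α n h z γ (by omega), if_neg (not_le.mpr hji)]

variable {α}

lemma isUnit_det_rhoMat (hα : α ≠ 0) : IsUnit (rhoMat Γ α n h z γ).det := by
  rw [isUnit_iff_ne_zero, Matrix.det_of_isUpperTriangular (rhoMat_isUpperTriangular α n h z γ),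
    Finset.prod_ne_zero_iff]
  intro i _
  by_cases hi : (i : ℕ) = 0
  · simpa [rhoMat, hi] using zpow_ne_zero _ hα
  · simp [rhoMat_apply_of_ne_zero α n h z γ hi, gbinom_zero_right]

lemma rhoMat_inv_apply_of_le (hα : α ≠ 0) {c b : Fin n} (hc : (c : ℕ) ≠ 0) (hbc : b ≤ c) :
    (rhoMat Γ α n h z γ)⁻¹ c b = if b = c then 1 else 0 := by
  have hdet := isUnit_det_rhoMat n h z γ hα
  rcases hbc.lt_or_eq with hlt | rfl
  · have := (rhoMat Γ α n h z γ).invertibleOfIsUnitDet hdet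
    rw [if_neg hlt.ne,
      blockTriangular_inv_of_blockTriangular (rhoMat_isUpperTriangular α n h z γ) hlt]
  · rw [if_pos rfl]
    simpa [rhoMat_apply_of_ne_zero α n h z γ hc, gbinom_zero_right] using
      (rhoMat_isUpperTriangular α n h z γ).inv_apply_self_mul_apply_self hdet b

variable (α)

lemma rhoMat_mulVec_binomVec_apply_of_eq_zero {a : Fin n} (ha : (a : ℕ) = 0) (m : ℤ) :
    (rhoMat Γ α n h z γ *ᵥ binomVec n m) a =
      ∑ i ∈ Finset.Icc 1 (n - 1), z γ i * gbinom m (n - i) := by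
  have hsummand : ∀ r : Fin n, rhoMat Γ α n h z γ a r * binomVec n m r =
      if 1 ≤ (r : ℕ) ∧ (r : ℕ) < n then z γ r * gbinom m (n - r) else 0 := by
    intro r
    by_cases hr : (r : ℕ) = 0 <;> simp [rhoMat, binomVec, ha, hr, Nat.one_le_iff_ne_zero]
  rw [Matrix.mulVec, dotProduct, Finset.sum_congr rfl fun r _ => hsummand r,
    Fin.sum_univ_ite_Ico_eq_sum_range le_rfl fun r => z γ r * gbinom m (n - r),
    ← Finset.sum_Ico_eq_sum_range (fun i => z γ i * gbinom m (n - i)),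
    Finset.Icc_sub_one_right_eq_Ico_of_not_isMin (by simpa using a.pos.ne')]

lemma rhoMat_mulVec_binomVec_apply_of_ne_zero {a : Fin n} (ha : (a : ℕ) ≠ 0) (m : ℤ) :
    (rhoMat Γ α n h z γ *ᵥ binomVec n m) a = binomVec n (h γ + m) a - binomVec n (h γ) a := by
  have hsummand : ∀ r : Fin n, rhoMat Γ α n h z γ a r * binomVec n m r =
      if (a : ℕ) ≤ r ∧ (r : ℕ) < n then gbinom (h γ) (r - a) * gbinom m (n - r) else 0 := by
    intro r
    rw [rhoMat_apply_of_ne_zero α n h z γ ha]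
    simp only [Fin.le_def]
    by_cases har : (a : ℕ) ≤ r
    · simp [binomVec, har, show (r : ℕ) ≠ 0 by omega]
    · simp [har]
  rw [Matrix.mulVec, dotProduct, Finset.sum_congr rfl fun r _ => hsummand r,
    Fin.sum_univ_ite_Ico_eq_sum_range le_rfl fun r => gbinom (h γ) (r - a) * gbinom m (n - r)]
  simp only [binomVec, if_neg ha, ← sum_range_gbinom_mul_gbinom, Nat.add_sub_cancel_left,
    Nat.sub_add_eq]

end rhoMat

/-- With `δf(γ₁,γ₂) = ϱ(γ₁) f(γ₂) ϱ(γ₁)⁻¹ − f(γ₁γ₂) + f(γ₁)`, the matrix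
`δf(γ₁,γ₂) − (Σ_{i=1}^{n−1} z_i(γ₁) h_{n−i}(γ₂)) E₁^{n−k}` has all entries in the
(1-based) columns `1, …, n−k` equal to zero; i.e. `δf = (Σ z_i ⌣ h_{n−i}) E₁^{n−k} + x`
with `x` taking values in `C(k−1)`. -/
theorem stmt13 (Γ : Type*) [Group Γ] (h : Γ → ℤ)
    (hh : ∀ a b : Γ, h (a * b) = h a + h b)
    (α : ℂ) (hα : α ≠ 0) (n : ℕ) (hn : 2 ≤ n) (z : Γ → ℕ → ℂ)
    (k : ℕ) (hk : k ≤ n - 2) :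
    ∀ γ₁ γ₂ : Γ, ∀ a b : Fin n, (b : ℕ) < n - k →
      (rhoMat Γ α n h z γ₁ * fcochain Γ h n k (by omega) γ₂
          * (rhoMat Γ α n h z γ₁)⁻¹
        - fcochain Γ h n k (by omega) (γ₁ * γ₂)
        + fcochain Γ h n k (by omega) γ₁
        - (∑ i ∈ Finset.Icc 1 (n - 1), z γ₁ i * gbinom (h γ₂) (n - i))
            • Matrix.single (⟨0, by omega⟩ : Fin n)
                (⟨n - 1 - k, by omega⟩ : Fin n) (1 : ℂ)) a b = 0 := by
  intro γ₁ γ₂ a b hb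
  have hinv := rhoMat_inv_apply_of_le n h z γ₁ hα (c := ⟨n - 1 - k, by omega⟩) (b := b)
    (show n - 1 - k ≠ 0 by omega) (Fin.mk_le_mk.mpr (by omega))
  simp only [fcochain_eq_vecMulVec, mul_vecMulVec, vecMulVec_mul, single_one_vecMul,
    Matrix.sub_apply, Matrix.add_apply, Matrix.smul_apply, vecMulVec_apply, Matrix.row_apply, hinv]
  by_cases hbc : b = ⟨n - 1 - k, by omega⟩
  · by_cases ha : (a : ℕ) = 0
    · simp [rhoMat_mulVec_binomVec_apply_of_eq_zero α n h z γ₁ ha, binomVec, ha, hbc,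
        Matrix.single_apply, Fin.ext_iff]
    · simp [rhoMat_mulVec_binomVec_apply_of_ne_zero α n h z γ₁ ha, hbc, Fin.ext_iff, Ne.symm ha,
        hh]
  · simp [hbc, Ne.symm hbc]

end
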